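/- Let w₋ < w_m, w̃ := w_m − w₋, and let w(t,x) be the global smooth solution of the Burgers equation ∂_t w + w ∂_x w = 0 with initial data w₀(x) = (w_m + w₋)/2 + ((w_m − w₋)/2)·tanh x, defined by the characteristics w(t,x) = w₀(x₀(t,x)) with x = x₀(t,x) + t·w₀(x₀(t,x)). Then for every p ∈ [1, ∞] there exists a constant C_p > 0, depending only on p, such that for all t > 0: ‖∂_x w(t,·)‖_{L^p(ℝ)} ≤ C_p · min{ w̃, w̃^{1/p} t^{−1+1/p} }, ‖∂_x² w(t,·)‖_{L^p(ℝ)} ≤ C_p · min{ w̃, t^{−1} }, and ‖∂_x³ w(t,·)‖_{L^p(ℝ)} ≤ C_p · min{ w̃, t^{−1} } (with the convention w̃^{1/∞} t^{−1+1/∞} = t^{−1}). -/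

import Mathlib

open MeasureTheory Real Filter Set
open scoped ENNReal Topology

/-- Smoothed Riemann data for the Burgers equation:
`w₀(x) = (w_m + w₋)/2 + ((w_m - w₋)/2) tanh x`. -/
noncomputable def burgersInit (wminus wm : ℝ) : ℝ → ℝ :=
  fun x => (wm + wminus) / 2 + (wm - wminus) / 2 * Real.tanh x

lemma tanh_lt_one' (y : ℝ) : Real.tanh y < 1 := by
  rw [Real.tanh_eq_sinh_div_cosh, div_lt_one (Real.cosh_pos y)]
  exact Real.sinh_lt_cosh y

lemma neg_one_lt_tanh' (y : ℝ) : -1 < Real.tanh y := by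
  have := tanh_lt_one' (-y)
  rw [Real.tanh_neg] at this; linarith

lemma hasDerivAt_tanh (y : ℝ) : HasDerivAt Real.tanh (1 - Real.tanh y ^ 2) y := by
  have hc : (Real.cosh y) ≠ 0 := (Real.cosh_pos y).ne'
  have h : HasDerivAt (fun x => Real.sinh x / Real.cosh x)
      ((Real.cosh y * Real.cosh y - Real.sinh y * Real.sinh y) / Real.cosh y ^ 2) y :=
    (Real.hasDerivAt_sinh y).div (Real.hasDerivAt_cosh y) hc
  have h2 : (Real.cosh y * Real.cosh y - Real.sinh y * Real.sinh y) / Real.cosh y ^ 2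
      = 1 - Real.tanh y ^ 2 := by
    rw [Real.tanh_eq_sinh_div_cosh]
    field_simp
  rw [h2] at h
  exact h.congr_of_eventuallyEq (by filter_upwards with x; rw [Real.tanh_eq_sinh_div_cosh])

namespace BurgersAux

noncomputable def G (a : ℝ) : ℝ → ℝ := fun y => a * (1 - Real.tanh y ^ 2)
noncomputable def G1 (a : ℝ) : ℝ → ℝ := fun y => -2 * Real.tanh y * G a y
noncomputable def G2 (a : ℝ) : ℝ → ℝ := fun y => -2 * (1 - 3 * Real.tanh y ^ 2) * G a y
noncomputable def D (a t : ℝ) : ℝ → ℝ := fun y => 1 + t * G a y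

variable {a t : ℝ}

lemma G_pos (ha : 0 < a) (y : ℝ) : 0 < G a y := by
  have h1 := tanh_lt_one' y; have h2 := neg_one_lt_tanh' y
  have : Real.tanh y ^ 2 < 1 := by nlinarith
  have : 0 < 1 - Real.tanh y ^ 2 := by linarith
  exact mul_pos ha this

lemma G_le (ha : 0 < a) (y : ℝ) : G a y ≤ a := by
  have : Real.tanh y ^ 2 ≥ 0 := sq_nonneg _
  calc G a y = a * (1 - Real.tanh y ^ 2) := rfl
    _ ≤ a * 1 := by nlinarith
    _ = a := mul_one a

lemma D_ge_one (ha : 0 < a) (ht : 0 < t) (y : ℝ) : 1 ≤ D a t y := by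
  have := G_pos ha y
  have : 0 ≤ t * G a y := by positivity
  simp only [D]; linarith

lemma D_pos (ha : 0 < a) (ht : 0 < t) (y : ℝ) : 0 < D a t y :=
  lt_of_lt_of_le one_pos (D_ge_one ha ht y)

lemma tG_le_D (ha : 0 < a) (ht : 0 < t) (y : ℝ) : t * G a y ≤ D a t y := by
  simp only [D]; linarith

lemma hasDerivAt_G (y : ℝ) : HasDerivAt (G a) (G1 a y) y := by
  have h := ((hasDerivAt_tanh y).pow 2).const_sub 1
  have h2 := h.const_mul a
  refine h2.congr_deriv ?_
  simp only [G1, G, Nat.cast_ofNat]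
  ring

lemma hasDerivAt_G1 (y : ℝ) : HasDerivAt (G1 a) (G2 a y) y := by
  have h := ((hasDerivAt_tanh y).const_mul (-2 : ℝ)).mul (hasDerivAt_G (a := a) y)
  refine h.congr_deriv ?_
  simp only [G2, G1, G]
  ring

lemma abs_G1_le (ha : 0 < a) (y : ℝ) : |G1 a y| ≤ 2 * G a y := by
  have hg := G_pos ha y
  have h1 := tanh_lt_one' y; have h2 := neg_one_lt_tanh' y
  have : |Real.tanh y| ≤ 1 := abs_le.2 ⟨h2.le, h1.le⟩
  calc |G1 a y| = 2 * |Real.tanh y| * G a y := by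
        simp only [G1]; rw [abs_mul, abs_of_nonneg hg.le, abs_mul]; norm_num
    _ ≤ 2 * 1 * G a y := by nlinarith
    _ = 2 * G a y := by ring

lemma abs_G2_le (ha : 0 < a) (y : ℝ) : |G2 a y| ≤ 4 * G a y := by
  have hg := G_pos ha y
  have h1 := tanh_lt_one' y; have h2 := neg_one_lt_tanh' y
  have h3 : Real.tanh y ^ 2 ≤ 1 := by nlinarith
  have : |1 - 3 * Real.tanh y ^ 2| ≤ 2 := by
    rw [abs_le]; constructor <;> nlinarith [sq_nonneg (Real.tanh y)]
  calc |G2 a y| = 2 * |1 - 3 * Real.tanh y ^ 2| * G a y := by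
        simp only [G2]; rw [abs_mul, abs_of_nonneg hg.le, abs_mul]; norm_num
    _ ≤ 2 * 2 * G a y := by nlinarith
    _ = 4 * G a y := by ring

/-- The characteristic map. -/
noncomputable def Fc (wminus wm t : ℝ) : ℝ → ℝ := fun y => y + t * burgersInit wminus wm y

lemma hasDerivAt_Fc {wminus wm : ℝ} (h : wminus < wm) (ht : 0 < t) (y : ℝ) :
    HasDerivAt (Fc wminus wm t) (D ((wm - wminus)/2) t y) y := by
  have hw : HasDerivAt (burgersInit wminus wm) (G ((wm - wminus)/2) y) y := by
    have := ((hasDerivAt_tanh y).const_mul ((wm - wminus)/2)).const_add ((wm + wminus)/2)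
    exact this
  have := (hasDerivAt_id y).add (hw.const_mul t)
  exact this

lemma Fc_strictMono {wminus wm : ℝ} (h : wminus < wm) (ht : 0 < t) :
    StrictMono (Fc wminus wm t) := by
  have ha : 0 < (wm - wminus)/2 := by linarith
  apply strictMono_of_deriv_pos
  intro y
  rw [(hasDerivAt_Fc h ht y).deriv]
  exact D_pos ha ht y

section Inverse

variable {wminus wm : ℝ} (hw : wminus < wm) (ht : 0 < t) {X : ℝ → ℝ}
  (hX : ∀ x, Fc wminus wm t (X x) = x)

include hw ht hX

lemma X_leftinv (y : ℝ) : X (Fc wminus wm t y) = y :=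
  (Fc_strictMono hw ht).injective (hX _)

lemma X_mono : Monotone X := by
  intro x₁ x₂ h
  by_contra hc
  push_neg at hc
  have := (Fc_strictMono hw ht) hc
  rw [hX, hX] at this
  exact absurd this (not_lt.2 h)

lemma X_surj : Function.Surjective X := fun y => ⟨Fc wminus wm t y, X_leftinv hw ht hX y⟩

lemma X_cont : Continuous X :=
  (X_mono hw ht hX).continuous_of_surjective (X_surj hw ht hX)

lemma hasDerivAt_X (x : ℝ) :
    HasDerivAt X (D ((wm - wminus)/2) t (X x))⁻¹ x := by
  have ha : 0 < (wm - wminus)/2 := by linarith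
  refine HasDerivAt.of_local_left_inverse ((X_cont hw ht hX).continuousAt)
    (hasDerivAt_Fc hw ht (X x)) (D_pos ha ht (X x)).ne' ?_
  filter_upwards with y
  exact hX y

end Inverse



noncomputable def P1 (a t : ℝ) : ℝ → ℝ := fun y => G a y / D a t y
noncomputable def P2 (a t : ℝ) : ℝ → ℝ := fun y => G1 a y / (D a t y) ^ 3
noncomputable def P3 (a t : ℝ) : ℝ → ℝ :=
  fun y => G2 a y / (D a t y) ^ 4 - 3 * t * (G1 a y) ^ 2 / (D a t y) ^ 5

variable {a t : ℝ}

lemma hasDerivAt_D (y : ℝ) : HasDerivAt (D a t) (t * G1 a y) y :=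
  ((hasDerivAt_G y).const_mul t).const_add 1

lemma hasDerivAt_P1 (ha : 0 < a) (ht : 0 < t) (y : ℝ) :
    HasDerivAt (P1 a t) (G1 a y / (D a t y) ^ 2) y := by
  have hD := (D_pos ha ht y).ne'
  have h := (hasDerivAt_G (a := a) y).div (hasDerivAt_D (a := a) (t := t) y) hD
  refine h.congr_deriv ?_
  have : G1 a y * D a t y - G a y * (t * G1 a y) = G1 a y := by
    simp only [D]; ring
  rw [this]

lemma hasDerivAt_P2 (ha : 0 < a) (ht : 0 < t) (y : ℝ) :
    HasDerivAt (P2 a t)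
      (G2 a y / (D a t y) ^ 3 - 3 * t * (G1 a y) ^ 2 / (D a t y) ^ 4) y := by
  have hD := (D_pos ha ht y).ne'
  have hD3 : (D a t y) ^ 3 ≠ 0 := pow_ne_zero _ hD
  have hpow : HasDerivAt (fun z => (D a t z) ^ 3)
      (3 * (D a t y) ^ 2 * (t * G1 a y)) y := by
    have := (hasDerivAt_D (a := a) (t := t) y).pow 3
    refine this.congr_deriv ?_
    norm_num
  have h := (hasDerivAt_G1 (a := a) y).div hpow hD3
  refine h.congr_deriv ?_
  rw [div_sub_div _ _ (pow_ne_zero 3 hD) (pow_ne_zero 4 hD), div_eq_div_iff (by positivity) (by positivity)]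
  ring

lemma div_pow_mul_inv (x d : ℝ) (n : ℕ) : x / d ^ n * d⁻¹ = x / d ^ (n + 1) := by
  rw [← div_eq_mul_inv, div_div, ← pow_succ]

lemma hasDerivAt_w0 {wminus wm : ℝ} (y : ℝ) :
    HasDerivAt (burgersInit wminus wm) (G ((wm - wminus)/2) y) y := by
  have := ((hasDerivAt_tanh y).const_mul ((wm - wminus)/2)).const_add ((wm + wminus)/2)
  exact this

section Chain

variable {wminus wm : ℝ} (hw : wminus < wm) (ht : 0 < t) {X : ℝ → ℝ}
  (hX : ∀ x, Fc wminus wm t (X x) = x)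

include hw ht hX

lemma hasDerivAt_W (x : ℝ) :
    HasDerivAt (fun y => burgersInit wminus wm (X y)) (P1 ((wm - wminus)/2) t (X x)) x := by
  have h := (hasDerivAt_w0 (wminus := wminus) (wm := wm) (X x)).comp x (hasDerivAt_X hw ht hX x)
  exact h

lemma hasDerivAt_W1 (x : ℝ) :
    HasDerivAt (fun z => P1 ((wm - wminus)/2) t (X z)) (P2 ((wm - wminus)/2) t (X x)) x := by
  have ha : 0 < (wm - wminus)/2 := by linarith
  have h := (hasDerivAt_P1 ha ht (X x)).comp x (hasDerivAt_X hw ht hX x)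
  refine h.congr_deriv ?_
  simp only [P2]
  rw [div_pow_mul_inv]

lemma hasDerivAt_W2 (x : ℝ) :
    HasDerivAt (fun z => P2 ((wm - wminus)/2) t (X z)) (P3 ((wm - wminus)/2) t (X x)) x := by
  have ha : 0 < (wm - wminus)/2 := by linarith
  have h := (hasDerivAt_P2 ha ht (X x)).comp x (hasDerivAt_X hw ht hX x)
  refine h.congr_deriv ?_
  simp only [P3]
  rw [sub_mul, div_pow_mul_inv, div_pow_mul_inv]

lemma deriv_W_eq :
    deriv (fun y => burgersInit wminus wm (X y)) = fun x => P1 ((wm - wminus)/2) t (X x) :=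
  funext fun x => (hasDerivAt_W hw ht hX x).deriv

lemma iteratedDeriv_two_eq :
    iteratedDeriv 2 (fun y => burgersInit wminus wm (X y))
      = fun x => P2 ((wm - wminus)/2) t (X x) := by
  rw [iteratedDeriv_succ, iteratedDeriv_one, deriv_W_eq hw ht hX]
  exact funext fun x => (hasDerivAt_W1 hw ht hX x).deriv

lemma iteratedDeriv_three_eq :
    iteratedDeriv 3 (fun y => burgersInit wminus wm (X y))
      = fun x => P3 ((wm - wminus)/2) t (X x) := by
  rw [show (3 : ℕ) = 2 + 1 from rfl, iteratedDeriv_succ, iteratedDeriv_two_eq hw ht hX]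
  exact funext fun x => (hasDerivAt_W2 hw ht hX x).deriv

end Chain

section Bounds

variable {a t : ℝ}

lemma div_le_div_same' {x y c : ℝ} (h : x ≤ y) (hc : 0 < c) : x / c ≤ y / c :=
  (div_le_div_iff_of_pos_right hc).2 h

lemma G_div_D_pow_le (ha : 0 < a) (ht : 0 < t) (y : ℝ) {n : ℕ} (hn : 1 ≤ n) :
    G a y / D a t y ^ n ≤ min a t⁻¹ := by
  have hD1 := D_ge_one ha ht y
  have hDn : (0:ℝ) < D a t y ^ n := pow_pos (D_pos ha ht y) n
  have hDle : D a t y ≤ D a t y ^ n := le_self_pow₀ hD1 (by omega)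
  have hG := G_pos ha y
  have htG := tG_le_D ha ht y
  refine le_min ?_ ?_
  · rw [div_le_iff₀ hDn]
    nlinarith [G_le ha y, one_le_pow₀ hD1 (n := n)]
  · rw [div_le_iff₀ hDn, inv_mul_eq_div, le_div_iff₀ ht]
    nlinarith

lemma G_div_D_pow_nonneg (ha : 0 < a) (ht : 0 < t) (y : ℝ) (n : ℕ) :
    0 ≤ G a y / D a t y ^ n :=
  div_nonneg (G_pos ha y).le (pow_pos (D_pos ha ht y) n).le

lemma abs_P1_le (ha : 0 < a) (ht : 0 < t) (y : ℝ) : |P1 a t y| ≤ min a t⁻¹ := by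
  rw [show P1 a t y = G a y / D a t y ^ 1 by simp [P1],
    abs_of_nonneg (G_div_D_pow_nonneg ha ht y 1)]
  exact G_div_D_pow_le ha ht y le_rfl

lemma abs_P2_le (ha : 0 < a) (ht : 0 < t) (y : ℝ) : |P2 a t y| ≤ 2 * min a t⁻¹ := by
  have hDn : (0:ℝ) < D a t y ^ 3 := pow_pos (D_pos ha ht y) 3
  calc |P2 a t y| = |G1 a y| / D a t y ^ 3 := by
        simp only [P2]; rw [abs_div, abs_of_pos hDn]
    _ ≤ 2 * G a y / D a t y ^ 3 := div_le_div_same' (abs_G1_le ha y) hDn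
    _ = 2 * (G a y / D a t y ^ 3) := by ring
    _ ≤ 2 * min a t⁻¹ := by
        have := G_div_D_pow_le ha ht y (n := 3) (by norm_num); linarith

lemma abs_P3_le (ha : 0 < a) (ht : 0 < t) (y : ℝ) : |P3 a t y| ≤ 16 * min a t⁻¹ := by
  have hD1 := D_ge_one ha ht y
  have hD0 := D_pos ha ht y
  have hG := G_pos ha y
  have htG := tG_le_D ha ht y
  have h4 : (0:ℝ) < D a t y ^ 4 := pow_pos hD0 4
  have h5 : (0:ℝ) < D a t y ^ 5 := pow_pos hD0 5
  have hnn : (0:ℝ) ≤ 3 * t * G1 a y ^ 2 := by nlinarith [sq_nonneg (G1 a y)]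
  have key : |P3 a t y| ≤ |G2 a y| / D a t y ^ 4 + 3 * t * G1 a y ^ 2 / D a t y ^ 5 := by
    simp only [P3]
    refine (abs_sub _ _).trans ?_
    rw [abs_div, abs_of_pos h4, abs_div, abs_of_pos h5, abs_of_nonneg hnn]
  have h1 : |G2 a y| / D a t y ^ 4 ≤ 4 * (G a y / D a t y ^ 4) := by
    rw [← mul_div_assoc]
    exact div_le_div_same' (abs_G2_le ha y) h4
  have h2 : 3 * t * G1 a y ^ 2 / D a t y ^ 5 ≤ 12 * (G a y / D a t y ^ 4) := by
    rw [← mul_div_assoc, div_le_div_iff₀ h5 h4]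
    have hG1 : G1 a y ^ 2 ≤ 4 * G a y ^ 2 := by
      have := abs_G1_le ha y
      nlinarith [sq_abs (G1 a y), abs_nonneg (G1 a y)]
    nlinarith [mul_le_mul_of_nonneg_left htG
        (mul_nonneg hG.le (pow_pos hD0 3).le : (0:ℝ) ≤ G a y * D a t y ^ 3),
      mul_le_mul_of_nonneg_left hG1
        (mul_nonneg ht.le (pow_pos hD0 4).le : (0:ℝ) ≤ t * D a t y ^ 4)]
  have hmin := G_div_D_pow_le ha ht y (n := 4) (by norm_num)
  calc |P3 a t y| ≤ 4 * (G a y / D a t y ^ 4) + 12 * (G a y / D a t y ^ 4) := by linarith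
    _ = 16 * (G a y / D a t y ^ 4) := by ring
    _ ≤ 16 * min a t⁻¹ := by linarith

lemma D_mul_abs_P1 (ha : 0 < a) (ht : 0 < t) (y : ℝ) :
    D a t y * |P1 a t y| = G a y := by
  have hD0 := (D_pos ha ht y).ne'
  have h1 : |P1 a t y| = P1 a t y :=
    abs_of_nonneg (by simpa [P1, pow_one] using G_div_D_pow_nonneg ha ht y 1)
  rw [h1]; simp only [P1]; field_simp

lemma D_mul_abs_P2_le (ha : 0 < a) (ht : 0 < t) (y : ℝ) :
    D a t y * |P2 a t y| ≤ 2 * (G a y / D a t y ^ 2) := by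
  have hD0 := D_pos ha ht y
  have h2 : (0:ℝ) < D a t y ^ 2 := pow_pos hD0 2
  have h3 : (0:ℝ) < D a t y ^ 3 := pow_pos hD0 3
  have heq : D a t y * |P2 a t y| = |G1 a y| / D a t y ^ 2 := by
    simp only [P2]
    rw [abs_div, abs_of_pos h3]
    field_simp
  rw [heq, ← mul_div_assoc]
  exact div_le_div_same' (abs_G1_le ha y) h2

lemma D_mul_abs_P3_le (ha : 0 < a) (ht : 0 < t) (y : ℝ) :
    D a t y * |P3 a t y| ≤ 16 * (G a y / D a t y ^ 2) := by
  have hD1 := D_ge_one ha ht y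
  have hD0 := D_pos ha ht y
  have hG := G_pos ha y
  have htG := tG_le_D ha ht y
  have h2 : (0:ℝ) < D a t y ^ 2 := pow_pos hD0 2
  have h3 : (0:ℝ) < D a t y ^ 3 := pow_pos hD0 3
  have h4 : (0:ℝ) < D a t y ^ 4 := pow_pos hD0 4
  have h5 : (0:ℝ) < D a t y ^ 5 := pow_pos hD0 5
  have hnn : (0:ℝ) ≤ 3 * t * G1 a y ^ 2 := by nlinarith [sq_nonneg (G1 a y)]
  have key : |P3 a t y| ≤ |G2 a y| / D a t y ^ 4 + 3 * t * G1 a y ^ 2 / D a t y ^ 5 := by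
    simp only [P3]
    refine (abs_sub _ _).trans ?_
    rw [abs_div, abs_of_pos h4, abs_div, abs_of_pos h5, abs_of_nonneg hnn]
  have step : D a t y * |P3 a t y|
      ≤ |G2 a y| / D a t y ^ 3 + 3 * t * G1 a y ^ 2 / D a t y ^ 4 := by
    have hh := mul_le_mul_of_nonneg_left key hD0.le
    have heq : D a t y * (|G2 a y| / D a t y ^ 4 + 3 * t * G1 a y ^ 2 / D a t y ^ 5)
        = |G2 a y| / D a t y ^ 3 + 3 * t * G1 a y ^ 2 / D a t y ^ 4 := by
      field_simp
    linarith [hh.trans_eq heq]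
  have h1 : |G2 a y| / D a t y ^ 3 ≤ 4 * G a y / D a t y ^ 2 := by
    have e1 : |G2 a y| / D a t y ^ 3 ≤ 4 * G a y / D a t y ^ 3 :=
      div_le_div_same' (abs_G2_le ha y) h3
    have e2 : 4 * G a y / D a t y ^ 3 ≤ 4 * G a y / D a t y ^ 2 := by
      apply div_le_div_of_nonneg_left (by nlinarith) h2
      calc D a t y ^ 2 = D a t y ^ 2 * 1 := by ring
        _ ≤ D a t y ^ 2 * D a t y := by nlinarith
        _ = D a t y ^ 3 := by ring
    exact e1.trans e2
  have h2' : 3 * t * G1 a y ^ 2 / D a t y ^ 4 ≤ 12 * G a y / D a t y ^ 2 := by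
    rw [div_le_div_iff₀ h4 h2]
    have hG1 : G1 a y ^ 2 ≤ 4 * G a y ^ 2 := by
      have := abs_G1_le ha y
      nlinarith [sq_abs (G1 a y), abs_nonneg (G1 a y)]
    have f1 : t * D a t y ^ 2 * G1 a y ^ 2 ≤ t * D a t y ^ 2 * (4 * G a y ^ 2) :=
      mul_le_mul_of_nonneg_left hG1 (mul_nonneg ht.le h2.le)
    have f2 : (G a y * D a t y ^ 2) * (t * G a y) ≤ (G a y * D a t y ^ 2) * D a t y :=
      mul_le_mul_of_nonneg_left htG (mul_nonneg hG.le h2.le)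
    have f3 : G a y * D a t y ^ 3 ≤ G a y * D a t y ^ 4 := by
      nlinarith [mul_nonneg (mul_nonneg hG.le h3.le) (sub_nonneg.2 hD1)]
    nlinarith [f1, f2, f3]
  have hsum : 4 * G a y / D a t y ^ 2 + 12 * G a y / D a t y ^ 2
      = 16 * (G a y / D a t y ^ 2) := by ring
  linarith

end Bounds

section Tanh

lemma continuous_tanh : Continuous Real.tanh := by
  have : Real.tanh = fun x => Real.sinh x / Real.cosh x := by
    funext x; exact Real.tanh_eq_sinh_div_cosh x
  rw [this]
  exact Real.continuous_sinh.div Real.continuous_cosh fun x => (Real.cosh_pos x).ne'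

lemma tanh_eq_exp (x : ℝ) : Real.tanh x = 1 - 2 / (Real.exp (2*x) + 1) := by
  rw [Real.tanh_eq_sinh_div_cosh, Real.sinh_eq, Real.cosh_eq]
  have h1 : 0 < Real.exp x := Real.exp_pos x
  have h2 : Real.exp (2*x) = Real.exp x * Real.exp x := by
    rw [two_mul, Real.exp_add]
  have h3 : Real.exp (-x) = (Real.exp x)⁻¹ := Real.exp_neg x
  rw [h2, h3]
  have h4 : Real.exp x * Real.exp x + 1 > 0 := by positivity
  have h5 : Real.exp x + (Real.exp x)⁻¹ > 0 := by positivity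
  field_simp
  ring

lemma tendsto_tanh_atTop : Filter.Tendsto Real.tanh atTop (𝓝 1) := by
  have h : Filter.Tendsto (fun x : ℝ => 1 - 2 / (Real.exp (2*x) + 1)) atTop (𝓝 (1 - 0)) := by
    apply Filter.Tendsto.const_sub
    apply Filter.Tendsto.div_atTop (tendsto_const_nhds)
    apply Filter.tendsto_atTop_add_const_right
    exact Real.tendsto_exp_atTop.comp (Filter.tendsto_id.const_mul_atTop two_pos)
  rw [sub_zero] at h
  exact h.congr fun x => (tanh_eq_exp x).symm

lemma exp_two_bounds : 7 < Real.exp 2 ∧ Real.exp 2 < 9 := by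
  have h2 : Real.exp 2 = Real.exp 1 * Real.exp 1 := by
    rw [← Real.exp_add]; norm_num
  have hl := Real.exp_one_gt_d9
  have hu := Real.exp_one_lt_d9
  constructor <;> rw [h2] <;> nlinarith

lemma tanh_one_bounds : (1:ℝ)/2 ≤ Real.tanh 1 ∧ Real.tanh 1 ≤ 4/5 := by
  have h := tanh_eq_exp 1
  rw [mul_one] at h
  obtain ⟨hl, hu⟩ := exp_two_bounds
  have hpos : (0:ℝ) < Real.exp 2 + 1 := by linarith
  rw [h]
  constructor
  · have : 2 / (Real.exp 2 + 1) ≤ 1/2 := by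
      rw [div_le_div_iff₀ hpos (by norm_num)]; linarith
    linarith
  · have : 2 / (Real.exp 2 + 1) ≥ 1/5 := by
      rw [ge_iff_le, div_le_div_iff₀ (by norm_num) hpos]; linarith
    linarith

lemma tanh_strictMono : StrictMono Real.tanh := by
  apply strictMono_of_deriv_pos
  intro x
  rw [(hasDerivAt_tanh x).deriv]
  have h1 := tanh_lt_one' x
  have h2 := neg_one_lt_tanh' x
  nlinarith

lemma tanh_nonneg_of_nonneg {y : ℝ} (hy : 0 ≤ y) : 0 ≤ Real.tanh y := by
  have := tanh_strictMono.monotone hy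
  rwa [Real.tanh_zero] at this

lemma half_le_tanh_of_one_le {y : ℝ} (hy : 1 ≤ y) : (1:ℝ)/2 ≤ Real.tanh y :=
  tanh_one_bounds.1.trans (tanh_strictMono.monotone hy)

lemma abs_tanh_le_of_abs_le_one {y : ℝ} (hy : |y| ≤ 1) : |Real.tanh y| ≤ 4/5 := by
  rw [abs_le] at hy ⊢
  constructor
  · have := tanh_strictMono.monotone hy.1
    rw [show Real.tanh (-1) = - Real.tanh 1 from Real.tanh_neg 1] at this
    linarith [tanh_one_bounds.2]
  · exact (tanh_strictMono.monotone hy.2).trans tanh_one_bounds.2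

end Tanh

section IntegralEstimates

variable {a t : ℝ}

lemma G_neg_eq (a y : ℝ) : G a (-y) = G a y := by simp [G, Real.tanh_neg]

lemma D_neg_eq (a t y : ℝ) : D a t (-y) = D a t y := by simp [D, G_neg_eq]

lemma continuous_G : Continuous (G a) :=
  continuous_const.mul (continuous_const.sub (continuous_tanh.pow 2))

lemma continuous_G1 : Continuous (G1 a) :=
  (continuous_const.mul continuous_tanh).mul continuous_G

lemma continuous_D : Continuous (D a t) :=
  continuous_const.add (continuous_const.mul continuous_G)

lemma setLIntegral_reflect (f : ℝ → ℝ≥0∞) (c : ℝ) :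
    ∫⁻ y in Iio (-c), f y = ∫⁻ y in Ioi c, f (-y) := by
  have h := (Measure.measurePreserving_neg (volume : Measure ℝ)).setLIntegral_comp_preimage_emb
    measurableEmbedding_neg f (Iio (-c))
  have hpre : (Neg.neg : ℝ → ℝ) ⁻¹' (Iio (-c)) = Ioi c := by
    ext x; simp [Set.mem_Iio, Set.mem_Ioi, neg_lt_neg_iff]
  rw [hpre] at h
  exact h.symm

lemma lintegral_split (f : ℝ → ℝ≥0∞) :
    ∫⁻ y, f y = (∫⁻ y in Iio (-1:ℝ), f y) + (∫⁻ y in Icc (-1:ℝ) 1, f y)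
      + ∫⁻ y in Ioi (1:ℝ), f y := by
  have huniv : (univ : Set ℝ) = Iio (-1) ∪ (Icc (-1) 1 ∪ Ioi 1) := by
    ext x
    simp only [mem_univ, mem_union, mem_Iio, mem_Icc, mem_Ioi, true_iff]
    rcases lt_or_ge x (-1) with h | h
    · exact Or.inl h
    · rcases le_or_gt x 1 with h2 | h2
      · exact Or.inr (Or.inl ⟨h, h2⟩)
      · exact Or.inr (Or.inr h2)
  have hd1 : Disjoint (Iio (-1:ℝ)) (Icc (-1) 1 ∪ Ioi 1) := by
    rw [Set.disjoint_left]
    rintro x hx (hx2 | hx2)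
    · simp only [mem_Iio] at hx; simp only [mem_Icc] at hx2; linarith
    · simp only [mem_Iio] at hx; simp only [mem_Ioi] at hx2; linarith
  have hd2 : Disjoint (Icc (-1:ℝ) 1) (Ioi 1) := by
    rw [Set.disjoint_left]
    intro x hx hx2
    simp only [mem_Icc] at hx; simp only [mem_Ioi] at hx2; linarith
  rw [← setLIntegral_univ, huniv,
    lintegral_union ((measurableSet_Icc).union measurableSet_Ioi) hd1,
    lintegral_union measurableSet_Ioi hd2, add_assoc]

lemma hasDerivAt_aTanh (y : ℝ) : HasDerivAt (fun z => a * Real.tanh z) (G a y) y :=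
  (hasDerivAt_tanh y).const_mul a

lemma tendsto_aTanh_atTop : Filter.Tendsto (fun z => a * Real.tanh z) atTop (𝓝 a) := by
  have := tendsto_tanh_atTop.const_mul a
  simpa using this

lemma integrableOn_G_Ioi (ha : 0 < a) : IntegrableOn (G a) (Ioi 0) volume :=
  integrableOn_Ioi_deriv_of_nonneg' (fun y _ => hasDerivAt_aTanh y)
    (fun y _ => (G_pos ha y).le) tendsto_aTanh_atTop

lemma integral_G_Ioi (ha : 0 < a) : ∫ y in Ioi (0:ℝ), G a y = a := by
  have h := integral_Ioi_of_hasDerivAt_of_nonneg' (a := (0:ℝ)) (fun y _ => hasDerivAt_aTanh y)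
    (fun y _ => (G_pos ha y).le) tendsto_aTanh_atTop
  rw [h, Real.tanh_zero]
  ring

lemma lintegral_G_Ioi (ha : 0 < a) :
    ∫⁻ y in Ioi (0:ℝ), ENNReal.ofReal (G a y) = ENNReal.ofReal a := by
  rw [← ofReal_integral_eq_lintegral_ofReal (integrableOn_G_Ioi ha)
    (Filter.Eventually.of_forall fun y => (G_pos ha y).le), integral_G_Ioi ha]

lemma lintegral_G_le (ha : 0 < a) :
    ∫⁻ y, ENNReal.ofReal (G a y) ≤ ENNReal.ofReal (2 * a) := by
  have hsplit : ∫⁻ y, ENNReal.ofReal (G a y)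
      = (∫⁻ y in Iio (0:ℝ), ENNReal.ofReal (G a y))
        + ∫⁻ y in Ici (0:ℝ), ENNReal.ofReal (G a y) := by
    rw [← setLIntegral_univ, ← lintegral_union measurableSet_Ici
      (Iio_disjoint_Ici le_rfl), Iio_union_Ici]
  have hIci : ∫⁻ y in Ici (0:ℝ), ENNReal.ofReal (G a y) = ENNReal.ofReal a := by
    rw [← setLIntegral_congr (Ioi_ae_eq_Ici (a := (0:ℝ)))]
    exact lintegral_G_Ioi ha
  have hIio : ∫⁻ y in Iio (0:ℝ), ENNReal.ofReal (G a y) = ENNReal.ofReal a := by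
    have h0 : Iio (0:ℝ) = Iio (-0) := by norm_num
    rw [h0, setLIntegral_reflect (fun y => ENNReal.ofReal (G a y)) 0]
    simp_rw [G_neg_eq]
    exact lintegral_G_Ioi ha
  rw [hsplit, hIci, hIio, ← ENNReal.ofReal_add ha.le ha.le]
  norm_num [two_mul]

/-- The auxiliary decreasing antiderivative on the tail. -/
noncomputable def Phi (a t : ℝ) : ℝ → ℝ := fun y => t⁻¹ * (D a t y)⁻¹

lemma hasDerivAt_Phi (ha : 0 < a) (ht : 0 < t) (y : ℝ) :
    HasDerivAt (Phi a t) (-G1 a y / D a t y ^ 2) y := by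
  have hD := (D_pos ha ht y).ne'
  have h := ((hasDerivAt_D (a := a) (t := t) y).inv hD).const_mul t⁻¹
  refine h.congr_deriv ?_
  field_simp

lemma tendsto_Phi_atTop (ha : 0 < a) (ht : 0 < t) :
    Filter.Tendsto (Phi a t) atTop (𝓝 t⁻¹) := by
  have hG : Filter.Tendsto (G a) atTop (𝓝 0) := by
    have h := (tendsto_tanh_atTop.mul tendsto_tanh_atTop).const_sub 1
    have h2 := h.const_mul a
    simp only [mul_one, sub_self, mul_zero] at h2
    apply h2.congr
    intro y
    simp only [G]; ring
  have hD : Filter.Tendsto (D a t) atTop (𝓝 1) := by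
    have := (hG.const_mul t).const_add 1
    simp at this; exact this
  have := (hD.inv₀ one_ne_zero).const_mul t⁻¹
  simp at this; exact this

lemma G1_nonpos_on_Ioi (ha : 0 < a) {y : ℝ} (hy : 0 ≤ y) : G1 a y ≤ 0 := by
  have h1 := tanh_nonneg_of_nonneg hy
  have h2 := (G_pos ha y).le
  simp only [G1]
  nlinarith

lemma tail_pointwise (ha : 0 < a) (ht : 0 < t) {y : ℝ} (hy : 1 ≤ y) :
    G a y / D a t y ^ 2 ≤ -G1 a y / D a t y ^ 2 := by
  have hD2 : (0:ℝ) < D a t y ^ 2 := pow_pos (D_pos ha ht y) 2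
  apply div_le_div_same' _ hD2
  have h := half_le_tanh_of_one_le hy
  have hG := G_pos ha y
  simp only [G1]
  nlinarith

lemma integrableOn_negG1D2_Ioi (ha : 0 < a) (ht : 0 < t) :
    IntegrableOn (fun y => -G1 a y / D a t y ^ 2) (Ioi 1) volume :=
  integrableOn_Ioi_deriv_of_nonneg' (fun y hy => hasDerivAt_Phi ha ht y)
    (fun y hy => div_nonneg (by linarith [G1_nonpos_on_Ioi ha (by linarith [mem_Ioi.1 hy] : (0:ℝ) ≤ y)])
      (pow_pos (D_pos ha ht y) 2).le)
    (tendsto_Phi_atTop ha ht)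

lemma integral_negG1D2_Ioi (ha : 0 < a) (ht : 0 < t) :
    ∫ y in Ioi (1:ℝ), -G1 a y / D a t y ^ 2 ≤ t⁻¹ := by
  have h := integral_Ioi_of_hasDerivAt_of_nonneg' (a := (1:ℝ)) (fun y hy => hasDerivAt_Phi ha ht y)
    (fun y hy => div_nonneg (by linarith [G1_nonpos_on_Ioi ha (by linarith [mem_Ioi.1 hy] : (0:ℝ) ≤ y)])
      (pow_pos (D_pos ha ht y) 2).le)
    (tendsto_Phi_atTop ha ht)
  rw [h]
  have hPhi1 : 0 ≤ Phi a t 1 :=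
    mul_nonneg (inv_nonneg.2 ht.le) (inv_nonneg.2 (D_pos ha ht 1).le)
  linarith

lemma tail_lintegral_Ioi (ha : 0 < a) (ht : 0 < t) :
    ∫⁻ y in Ioi (1:ℝ), ENNReal.ofReal (G a y / D a t y ^ 2) ≤ ENNReal.ofReal t⁻¹ := by
  have hmono : ∫⁻ y in Ioi (1:ℝ), ENNReal.ofReal (G a y / D a t y ^ 2)
      ≤ ∫⁻ y in Ioi (1:ℝ), ENNReal.ofReal (-G1 a y / D a t y ^ 2) := by
    apply setLIntegral_mono
      (ENNReal.measurable_ofReal.comp ((continuous_G1.neg.div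
        (continuous_D.pow 2) (fun y => (pow_pos (D_pos ha ht y) 2).ne')).measurable))
    intro y hy
    exact ENNReal.ofReal_le_ofReal (tail_pointwise ha ht (mem_Ioi.1 hy).le)
  refine hmono.trans ?_
  have hae : 0 ≤ᵐ[volume.restrict (Ioi (1:ℝ))] fun y => -G1 a y / D a t y ^ 2 := by
    filter_upwards [self_mem_ae_restrict measurableSet_Ioi] with y hy
    exact div_nonneg
      (by linarith [G1_nonpos_on_Ioi ha (by linarith [mem_Ioi.1 hy] : (0:ℝ) ≤ y)])
      (pow_pos (D_pos ha ht y) 2).le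
  rw [← ofReal_integral_eq_lintegral_ofReal (integrableOn_negG1D2_Ioi ha ht) hae]
  exact ENNReal.ofReal_le_ofReal (integral_negG1D2_Ioi ha ht)

end IntegralEstimates

section Combine

variable {a t : ℝ}

lemma GD2_nonneg (ha : 0 < a) (ht : 0 < t) (y : ℝ) : 0 ≤ G a y / D a t y ^ 2 :=
  G_div_D_pow_nonneg ha ht y 2

lemma tail_lintegral_Iio (ha : 0 < a) (ht : 0 < t) :
    ∫⁻ y in Iio (-1:ℝ), ENNReal.ofReal (G a y / D a t y ^ 2) ≤ ENNReal.ofReal t⁻¹ := by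
  rw [setLIntegral_reflect (fun y => ENNReal.ofReal (G a y / D a t y ^ 2)) 1]
  simp_rw [G_neg_eq, D_neg_eq]
  exact tail_lintegral_Ioi ha ht

lemma mid_pointwise (ha : 0 < a) (ht : 0 < t) {y : ℝ} (hy : |y| ≤ 1) :
    G a y / D a t y ^ 2 ≤ 3 / (a * t ^ 2) := by
  have hG := G_pos ha y
  have hD := D_pos ha ht y
  have htG := tG_le_D ha ht y
  have hGlow : a * (9/25) ≤ G a y := by
    have h := abs_tanh_le_of_abs_le_one hy
    have h2 : Real.tanh y ^ 2 ≤ (4/5) ^ 2 := by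
      rw [← sq_abs]
      exact pow_le_pow_left₀ (abs_nonneg _) h 2
    simp only [G]
    nlinarith
  have step1 : G a y / D a t y ^ 2 ≤ G a y / (t * G a y) ^ 2 := by
    apply div_le_div_of_nonneg_left hG.le (by positivity)
    have htG0 : 0 < t * G a y := by positivity
    nlinarith
  have step2 : G a y / (t * G a y) ^ 2 = 1 / (t ^ 2 * G a y) := by
    field_simp
  have step3 : 1 / (t ^ 2 * G a y) ≤ 3 / (a * t ^ 2) := by
    rw [div_le_div_iff₀ (by positivity) (by positivity)]
    nlinarith [sq_nonneg t]
  calc G a y / D a t y ^ 2 ≤ 1 / (t ^ 2 * G a y) := step1.trans_eq step2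
    _ ≤ 3 / (a * t ^ 2) := step3

lemma mid_lintegral (ha : 0 < a) (ht : 0 < t) :
    ∫⁻ y in Icc (-1:ℝ) 1, ENNReal.ofReal (G a y / D a t y ^ 2)
      ≤ ENNReal.ofReal (6 / (a * t ^ 2)) := by
  have hb : ∫⁻ y in Icc (-1:ℝ) 1, ENNReal.ofReal (G a y / D a t y ^ 2)
      ≤ ∫⁻ _ in Icc (-1:ℝ) 1, ENNReal.ofReal (3 / (a * t ^ 2)) := by
    apply setLIntegral_mono measurable_const
    intro y hy
    apply ENNReal.ofReal_le_ofReal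
    apply mid_pointwise ha ht
    rw [abs_le]
    exact ⟨hy.1, hy.2⟩
  refine hb.trans ?_
  rw [setLIntegral_const, Real.volume_Icc]
  rw [← ENNReal.ofReal_mul (by positivity)]
  apply ENNReal.ofReal_le_ofReal
  rw [show (1:ℝ) - (-1) = 2 by norm_num]
  rw [show (6:ℝ) / (a * t ^ 2) = 3 / (a * t ^ 2) * 2 by ring]

lemma lintegral_GD2_le_G (ha : 0 < a) (ht : 0 < t) :
    ∫⁻ y, ENNReal.ofReal (G a y / D a t y ^ 2) ≤ ENNReal.ofReal (2 * a) := by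
  refine le_trans (lintegral_mono fun y => ?_) (lintegral_G_le ha)
  apply ENNReal.ofReal_le_ofReal
  have hD1 := D_ge_one ha ht y
  have hG := G_pos ha y
  calc G a y / D a t y ^ 2 ≤ G a y / 1 := by
        apply div_le_div_of_nonneg_left hG.le one_pos
        nlinarith
    _ = G a y := div_one _

lemma lintegral_GD2_le_inv_t (ha : 0 < a) (ht : 0 < t) :
    ∫⁻ y, ENNReal.ofReal (G a y / D a t y ^ 2) ≤ ENNReal.ofReal (8 * t⁻¹) := by
  rcases le_or_gt (t * a) 1 with h | h
  · refine (lintegral_GD2_le_G ha ht).trans (ENNReal.ofReal_le_ofReal ?_)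
    rw [show (8:ℝ) * t⁻¹ = 8 / t by rw [div_eq_mul_inv]]
    rw [show (2:ℝ) * a = 2 * a by rfl]
    rw [div_eq_mul_inv, ← mul_le_mul_iff_of_pos_right ht]
    have : 8 * t⁻¹ * t = 8 := by field_simp
    nlinarith [mul_pos ht ha]
  · rw [lintegral_split (fun y => ENNReal.ofReal (G a y / D a t y ^ 2))]
    have h1 := tail_lintegral_Iio ha ht
    have h2 := mid_lintegral ha ht
    have h3 := tail_lintegral_Ioi ha ht
    have hmid : (6:ℝ) / (a * t ^ 2) ≤ 6 * t⁻¹ := by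
      rw [div_le_iff₀ (by positivity)]
      have : 6 * t ≤ 6 * (a * t ^ 2) := by nlinarith
      calc (6:ℝ) = 6 * t * t⁻¹ := by field_simp
        _ ≤ 6 * t⁻¹ * (a * t ^ 2) := by
            rw [show 6 * t * t⁻¹ = t⁻¹ * (6 * t) by ring,
              show 6 * t⁻¹ * (a * t ^ 2) = t⁻¹ * (6 * (a * t ^ 2)) by ring]
            apply mul_le_mul_of_nonneg_left this (inv_nonneg.2 ht.le)
    calc _ ≤ ENNReal.ofReal t⁻¹ + ENNReal.ofReal (6 / (a * t ^ 2)) + ENNReal.ofReal t⁻¹ :=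
          add_le_add (add_le_add h1 h2) h3
      _ ≤ ENNReal.ofReal t⁻¹ + ENNReal.ofReal (6 * t⁻¹) + ENNReal.ofReal t⁻¹ := by
          gcongr <;> exact ENNReal.ofReal_le_ofReal hmid
      _ = ENNReal.ofReal (8 * t⁻¹) := by
          rw [← ENNReal.ofReal_add (by positivity) (by positivity),
            ← ENNReal.ofReal_add (by positivity) (by positivity)]
          congr 1
          ring

end Combine

section L1

variable {a t : ℝ}

lemma continuous_P1 (ha : 0 < a) (ht : 0 < t) : Continuous (P1 a t) :=
  continuous_G.div continuous_D fun y => (D_pos ha ht y).ne'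

lemma continuous_P2 (ha : 0 < a) (ht : 0 < t) : Continuous (P2 a t) :=
  continuous_G1.div (continuous_D.pow 3) fun y => (pow_pos (D_pos ha ht y) 3).ne'

lemma continuous_G2 : Continuous (G2 a) :=
  (continuous_const.mul (continuous_const.sub (continuous_const.mul
    (continuous_tanh.pow 2)))).mul continuous_G

lemma continuous_P3 (ha : 0 < a) (ht : 0 < t) : Continuous (P3 a t) :=
  (continuous_G2.div (continuous_D.pow 4) fun y => (pow_pos (D_pos ha ht y) 4).ne').sub
    ((continuous_const.mul (continuous_G1.pow 2)).div (continuous_D.pow 5)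
      fun y => (pow_pos (D_pos ha ht y) 5).ne')

lemma lintegral_GD2_min (ha : 0 < a) (ht : 0 < t) :
    ∫⁻ y, ENNReal.ofReal (G a y / D a t y ^ 2)
      ≤ ENNReal.ofReal (8 * min (2 * a) t⁻¹) := by
  rcases min_cases (2 * a) t⁻¹ with ⟨hm, _⟩ | ⟨hm, _⟩ <;> rw [hm]
  · refine (lintegral_GD2_le_G ha ht).trans (ENNReal.ofReal_le_ofReal ?_)
    nlinarith
  · exact lintegral_GD2_le_inv_t ha ht

variable {wminus wm : ℝ} (hw : wminus < wm) (ht : 0 < t) {X : ℝ → ℝ}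
  (hX : ∀ x, Fc wminus wm t (X x) = x)

include hw ht hX

lemma lintegral_comp_X (H : ℝ → ℝ≥0∞) :
    ∫⁻ x, H (X x) = ∫⁻ y, ENNReal.ofReal (D ((wm - wminus)/2) t y) * H y := by
  have ha : 0 < (wm - wminus)/2 := by linarith
  have hsurj : Function.Surjective (Fc wminus wm t) := fun x => ⟨X x, hX x⟩
  have himg : Fc wminus wm t '' univ = univ := by
    rw [Set.image_univ]
    exact Set.range_eq_univ.2 hsurj
  have hf' : ∀ y ∈ (univ : Set ℝ), HasFDerivWithinAt (Fc wminus wm t)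
      ((1 : ℝ →L[ℝ] ℝ).smulRight (D ((wm - wminus)/2) t y)) univ y :=
    fun y _ => ((hasDerivAt_Fc hw ht y).hasFDerivAt).hasFDerivWithinAt
  have hinj : InjOn (Fc wminus wm t) univ := (Fc_strictMono hw ht).injective.injOn
  have h := lintegral_image_eq_lintegral_abs_det_fderiv_mul volume MeasurableSet.univ hf' hinj
    (fun x => H (X x))
  rw [himg, setLIntegral_univ, setLIntegral_univ] at h
  rw [h]
  apply lintegral_congr
  intro y
  rw [ContinuousLinearMap.smulRight_one_eq_toSpanSingleton, ContinuousLinearMap.det_toSpanSingleton, abs_of_pos (D_pos ha ht y), X_leftinv hw ht hX y]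

lemma L1_comp (P : ℝ → ℝ) :
    ∫⁻ x, (‖P (X x)‖₊ : ℝ≥0∞)
      = ∫⁻ y, ENNReal.ofReal (D ((wm - wminus)/2) t y * |P y|) := by
  have h1 : ∀ r : ℝ, (‖r‖₊ : ℝ≥0∞) = ENNReal.ofReal |r| := fun r =>
    Real.enorm_eq_ofReal_abs r
  simp_rw [h1]
  rw [lintegral_comp_X hw ht hX (fun y => ENNReal.ofReal |P y|)]
  apply lintegral_congr
  intro y
  rw [← ENNReal.ofReal_mul]
  have ha : 0 < (wm - wminus)/2 := by linarith
  exact (D_pos ha ht y).le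

lemma L1_P1 :
    ∫⁻ x, (‖P1 ((wm - wminus)/2) t (X x)‖₊ : ℝ≥0∞)
      ≤ ENNReal.ofReal (2 * ((wm - wminus)/2)) := by
  have ha : 0 < (wm - wminus)/2 := by linarith
  rw [L1_comp hw ht hX]
  refine le_trans (le_of_eq (lintegral_congr fun y => ?_)) (lintegral_G_le ha)
  rw [D_mul_abs_P1 ha ht y]

lemma L1_P2 :
    ∫⁻ x, (‖P2 ((wm - wminus)/2) t (X x)‖₊ : ℝ≥0∞)
      ≤ ENNReal.ofReal (16 * min (2 * ((wm - wminus)/2)) t⁻¹) := by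
  have ha : 0 < (wm - wminus)/2 := by linarith
  rw [L1_comp hw ht hX]
  calc ∫⁻ y, ENNReal.ofReal (D ((wm - wminus)/2) t y * |P2 ((wm - wminus)/2) t y|)
      ≤ ∫⁻ y, 2 * ENNReal.ofReal (G ((wm - wminus)/2) y / D ((wm - wminus)/2) t y ^ 2) := by
        apply lintegral_mono
        intro y
        dsimp only
        rw [show (2:ℝ≥0∞) = ENNReal.ofReal 2 by norm_num, ← ENNReal.ofReal_mul (by norm_num)]
        exact ENNReal.ofReal_le_ofReal (D_mul_abs_P2_le ha ht y)
    _ = 2 * ∫⁻ y, ENNReal.ofReal (G ((wm - wminus)/2) y / D ((wm - wminus)/2) t y ^ 2) := by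
        rw [lintegral_const_mul']
        exact ENNReal.ofNat_ne_top
    _ ≤ 2 * ENNReal.ofReal (8 * min (2 * ((wm - wminus)/2)) t⁻¹) := by
        gcongr
        exact lintegral_GD2_min ha ht
    _ = ENNReal.ofReal (16 * min (2 * ((wm - wminus)/2)) t⁻¹) := by
        rw [show (2:ℝ≥0∞) = ENNReal.ofReal 2 by norm_num, ← ENNReal.ofReal_mul (by norm_num)]
        congr 1
        ring

lemma L1_P3 :
    ∫⁻ x, (‖P3 ((wm - wminus)/2) t (X x)‖₊ : ℝ≥0∞)
      ≤ ENNReal.ofReal (128 * min (2 * ((wm - wminus)/2)) t⁻¹) := by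
  have ha : 0 < (wm - wminus)/2 := by linarith
  rw [L1_comp hw ht hX]
  calc ∫⁻ y, ENNReal.ofReal (D ((wm - wminus)/2) t y * |P3 ((wm - wminus)/2) t y|)
      ≤ ∫⁻ y, 16 * ENNReal.ofReal (G ((wm - wminus)/2) y / D ((wm - wminus)/2) t y ^ 2) := by
        apply lintegral_mono
        intro y
        dsimp only
        rw [show (16:ℝ≥0∞) = ENNReal.ofReal 16 by norm_num, ← ENNReal.ofReal_mul (by norm_num)]
        exact ENNReal.ofReal_le_ofReal (D_mul_abs_P3_le ha ht y)
    _ = 16 * ∫⁻ y, ENNReal.ofReal (G ((wm - wminus)/2) y / D ((wm - wminus)/2) t y ^ 2) := by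
        rw [lintegral_const_mul']
        exact ENNReal.ofNat_ne_top
    _ ≤ 16 * ENNReal.ofReal (8 * min (2 * ((wm - wminus)/2)) t⁻¹) := by
        gcongr
        exact lintegral_GD2_min ha ht
    _ = ENNReal.ofReal (128 * min (2 * ((wm - wminus)/2)) t⁻¹) := by
        rw [show (16:ℝ≥0∞) = ENNReal.ofReal 16 by norm_num, ← ENNReal.ofReal_mul (by norm_num)]
        congr 1
        ring

end L1

section Interp

lemma interp_bound {f : ℝ → ℝ} {A B : ℝ} (hA : 0 ≤ A) (hB : 0 ≤ B)
    (h1 : ∫⁻ x, (‖f x‖₊ : ℝ≥0∞) ∂volume ≤ ENNReal.ofReal A)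
    (hb : ∀ x, |f x| ≤ B) {p : ℝ≥0∞} (hp : 1 ≤ p)
    (hmeas : AEStronglyMeasurable f volume) :
    eLpNorm f p volume
      ≤ ENNReal.ofReal (A ^ (p⁻¹).toReal * B ^ (1 - (p⁻¹).toReal)) := by
  rcases eq_or_ne p ⊤ with rfl | hptop
  · simp only [ENNReal.inv_top, ENNReal.toReal_zero, Real.rpow_zero, one_mul, sub_zero,
      Real.rpow_one]
    rw [eLpNorm_exponent_top]
    exact eLpNormEssSup_le_of_ae_bound (Filter.Eventually.of_forall fun x => by
      rw [Real.norm_eq_abs]; exact hb x)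
  · have hp0 : p ≠ 0 := by
      intro h; rw [h] at hp; exact absurd hp (by simp)
    set q : ℝ := p.toReal with hq
    have hq1 : 1 ≤ q := by
      rw [hq, ← ENNReal.toReal_one]
      exact ENNReal.toReal_mono hptop hp
    have hq0 : 0 < q := lt_of_lt_of_le one_pos hq1
    have hinv : (p⁻¹).toReal = q⁻¹ := by
      rw [ENNReal.toReal_inv]
    rw [eLpNorm_eq_lintegral_rpow_enorm_toReal hp0 hptop]
    have key : ∫⁻ x, (‖f x‖₊ : ℝ≥0∞) ^ q ∂volume
        ≤ ENNReal.ofReal A * ENNReal.ofReal B ^ (q - 1) := by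
      have hpt : ∀ x, (‖f x‖₊ : ℝ≥0∞) ^ q ≤ (‖f x‖₊ : ℝ≥0∞) * ENNReal.ofReal B ^ (q - 1) := by
        intro x
        have hle : (‖f x‖₊ : ℝ≥0∞) ≤ ENNReal.ofReal B := by
          rw [show (‖f x‖₊ : ℝ≥0∞) = ‖f x‖ₑ from rfl, Real.enorm_eq_ofReal_abs]
          exact ENNReal.ofReal_le_ofReal (hb x)
        rcases eq_or_ne (‖f x‖₊ : ℝ≥0∞) 0 with h0 | h0
        · rw [h0, ENNReal.zero_rpow_of_pos hq0]
          exact zero_le'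
        · have hfin : (‖f x‖₊ : ℝ≥0∞) ≠ ⊤ := ENNReal.coe_ne_top
          calc (‖f x‖₊ : ℝ≥0∞) ^ q = (‖f x‖₊ : ℝ≥0∞) ^ (1 + (q - 1)) := by norm_num
            _ = (‖f x‖₊ : ℝ≥0∞) ^ (1:ℝ) * (‖f x‖₊ : ℝ≥0∞) ^ (q - 1) :=
                ENNReal.rpow_add _ _ h0 hfin
            _ ≤ (‖f x‖₊ : ℝ≥0∞) * ENNReal.ofReal B ^ (q - 1) := by
                rw [ENNReal.rpow_one]
                exact mul_le_mul_right (ENNReal.rpow_le_rpow hle (by linarith)) _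
      calc ∫⁻ x, (‖f x‖₊ : ℝ≥0∞) ^ q ∂volume
          ≤ ∫⁻ x, (‖f x‖₊ : ℝ≥0∞) * ENNReal.ofReal B ^ (q - 1) ∂volume :=
            lintegral_mono hpt
        _ = (∫⁻ x, (‖f x‖₊ : ℝ≥0∞) ∂volume) * ENNReal.ofReal B ^ (q - 1) := by
            rw [lintegral_mul_const'']
            exact hmeas.enorm
        _ ≤ ENNReal.ofReal A * ENNReal.ofReal B ^ (q - 1) := by
            gcongr
    calc (∫⁻ x, (‖f x‖₊ : ℝ≥0∞) ^ q ∂volume) ^ (1 / q)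
        ≤ (ENNReal.ofReal A * ENNReal.ofReal B ^ (q - 1)) ^ (1 / q) :=
          ENNReal.rpow_le_rpow key (by positivity)
      _ = ENNReal.ofReal (A ^ (p⁻¹).toReal * B ^ (1 - (p⁻¹).toReal)) := by
          rw [ENNReal.mul_rpow_of_nonneg _ _ (by positivity : (0:ℝ) ≤ 1/q),
            ← ENNReal.rpow_mul,
            ENNReal.ofReal_rpow_of_nonneg hA (by positivity : (0:ℝ) ≤ 1/q),
            ENNReal.ofReal_rpow_of_nonneg hB
              (mul_nonneg (by linarith) (by positivity) : (0:ℝ) ≤ (q-1) * (1/q)),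
            ← ENNReal.ofReal_mul (by positivity), hinv]
          congr 2
          · rw [one_div]
          · rw [one_div]
            congr 1
            field_simp
  
end Interp

section FinalAlgebra

lemma rpow_interp_le {μ K K' θ : ℝ} (hμ : 0 < μ) (hθ0 : 0 ≤ θ) (hθ1 : θ ≤ 1)
    (hK : 0 ≤ K) (hK2 : K ≤ 200) (hK' : 0 ≤ K') (hK2' : K' ≤ 200) :
    (K * μ) ^ θ * (K' * μ) ^ (1 - θ) ≤ 200 * μ := by
  have h1 : (K * μ) ^ θ ≤ (200 * μ) ^ θ :=
    Real.rpow_le_rpow (by positivity) (by nlinarith) hθ0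
  have h2 : (K' * μ) ^ (1 - θ) ≤ (200 * μ) ^ (1 - θ) :=
    Real.rpow_le_rpow (by positivity) (by nlinarith) (by linarith)
  have h3 : (200 * μ) ^ θ * (200 * μ) ^ (1 - θ) = 200 * μ := by
    rw [← Real.rpow_add (by positivity)]
    norm_num
  calc (K * μ) ^ θ * (K' * μ) ^ (1 - θ)
      ≤ (200 * μ) ^ θ * (200 * μ) ^ (1 - θ) := by
        apply mul_le_mul h1 h2 (by positivity) (by positivity)
    _ = 200 * μ := h3

lemma rpow_interp_P1 {a t θ : ℝ} (ha : 0 < a) (ht : 0 < t) (hθ0 : 0 ≤ θ) (hθ1 : θ ≤ 1) :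
    (2 * a) ^ θ * (min a t⁻¹) ^ (1 - θ)
      ≤ min (2 * a) ((2 * a) ^ θ * t ^ (θ - 1)) := by
  have hmin : 0 < min a t⁻¹ := lt_min ha (by positivity)
  refine le_min ?_ ?_
  · calc (2 * a) ^ θ * (min a t⁻¹) ^ (1 - θ)
        ≤ (2 * a) ^ θ * (2 * a) ^ (1 - θ) := by
          apply mul_le_mul_of_nonneg_left _ (by positivity)
          apply Real.rpow_le_rpow hmin.le _ (by linarith)
          calc min a t⁻¹ ≤ a := min_le_left _ _
            _ ≤ 2 * a := by linarith
      _ = 2 * a := by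
          rw [← Real.rpow_add (by positivity)]
          norm_num
  · calc (2 * a) ^ θ * (min a t⁻¹) ^ (1 - θ)
        ≤ (2 * a) ^ θ * (t⁻¹) ^ (1 - θ) := by
          apply mul_le_mul_of_nonneg_left _ (by positivity)
          exact Real.rpow_le_rpow hmin.le (min_le_right _ _) (by linarith)
      _ = (2 * a) ^ θ * t ^ (θ - 1) := by
          congr 1
          rw [Real.inv_rpow ht.le, ← Real.rpow_neg ht.le]
          congr 1
          ring
  
end FinalAlgebra

end BurgersAux

open BurgersAux in
/-- Lᵖ decay estimates for the approximate rarefaction wave of the Burgers equation: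
with `w(t,x) = w₀(X₀(t,x))` given by characteristics (`X₀(t,·)` inverting
`x₀ ↦ x₀ + t w₀(x₀)`), for each `p ∈ [1,∞]` there is `C_p > 0` (depending only on
`p`) with, for `t > 0` and `w̃ = w_m - w₋`:
`‖∂ₓw(t)‖_p ≤ C min{w̃, w̃^(1/p) t^(-1+1/p)}` and
`‖∂ₓ²w(t)‖_p, ‖∂ₓ³w(t)‖_p ≤ C min{w̃, t⁻¹}` (for `p = ∞`, `1/p = 0`). -/
theorem stmt_11 (p : ℝ≥0∞) (hp : 1 ≤ p) :
    ∃ C > (0 : ℝ), ∀ wminus wm : ℝ, wminus < wm →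
      ∀ X₀ : ℝ → ℝ → ℝ,
        (∀ t : ℝ, 0 ≤ t → ∀ x : ℝ, X₀ t x + t * burgersInit wminus wm (X₀ t x) = x) →
        ∀ t : ℝ, 0 < t →
          eLpNorm (fun x => deriv (fun y => burgersInit wminus wm (X₀ t y)) x) p volume
            ≤ ENNReal.ofReal (C * min (wm - wminus)
                ((wm - wminus) ^ (p⁻¹).toReal * t ^ ((p⁻¹).toReal - 1))) ∧
          eLpNorm (fun x => iteratedDeriv 2 (fun y => burgersInit wminus wm (X₀ t y)) x)
              p volume
            ≤ ENNReal.ofReal (C * min (wm - wminus) t⁻¹) ∧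
          eLpNorm (fun x => iteratedDeriv 3 (fun y => burgersInit wminus wm (X₀ t y)) x)
              p volume
            ≤ ENNReal.ofReal (C * min (wm - wminus) t⁻¹) := by
  refine ⟨200, by norm_num, ?_⟩
  intro wminus wm hlt X₀ hX₀ t ht
  have hX : ∀ x, Fc wminus wm t (X₀ t x) = x := fun x => hX₀ t ht.le x
  have ha : 0 < (wm - wminus)/2 := by linarith
  have hθ0 : 0 ≤ (p⁻¹).toReal := ENNReal.toReal_nonneg
  have hθ1 : (p⁻¹).toReal ≤ 1 := by
    have h1 : p⁻¹ ≤ 1 := ENNReal.inv_le_one.2 hp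
    calc (p⁻¹).toReal ≤ (1 : ℝ≥0∞).toReal := ENNReal.toReal_mono (by simp) h1
      _ = 1 := by simp
  have hrw : 2 * ((wm - wminus)/2) = wm - wminus := by ring
  have htinv : 0 < t⁻¹ := inv_pos.2 ht
  have hμ : 0 < min (2 * ((wm - wminus)/2)) t⁻¹ := lt_min (by linarith) htinv
  have hminle : min ((wm - wminus)/2) t⁻¹ ≤ min (2 * ((wm - wminus)/2)) t⁻¹ :=
    le_min ((min_le_left _ _).trans (by linarith)) (min_le_right _ _)
  have hXcont := X_cont hlt ht hX
  refine ⟨?_, ?_, ?_⟩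
  · -- first derivative
    have hfun : (fun x => deriv (fun y => burgersInit wminus wm (X₀ t y)) x)
        = fun x => P1 ((wm - wminus)/2) t (X₀ t x) := by
      funext x
      exact congrFun (deriv_W_eq hlt ht hX) x
    rw [hfun]
    have hmeas : AEStronglyMeasurable (fun x => P1 ((wm - wminus)/2) t (X₀ t x)) volume :=
      ((continuous_P1 ha ht).comp hXcont).aestronglyMeasurable
    have key := interp_bound (f := fun x => P1 ((wm - wminus)/2) t (X₀ t x))
      (A := 2 * ((wm - wminus)/2)) (B := min ((wm - wminus)/2) t⁻¹)
      (by linarith) (le_min ha.le htinv.le) (L1_P1 hlt ht hX)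
      (fun x => abs_P1_le ha ht (X₀ t x)) hp hmeas
    refine key.trans ?_
    apply ENNReal.ofReal_le_ofReal
    have halg := rpow_interp_P1 (a := (wm - wminus)/2) (θ := (p⁻¹).toReal) ha ht hθ0 hθ1
    rw [hrw] at halg ⊢
    have hminpos : 0 < min (wm - wminus)
        ((wm - wminus) ^ (p⁻¹).toReal * t ^ ((p⁻¹).toReal - 1)) := by
      apply lt_min (by linarith)
      exact mul_pos (Real.rpow_pos_of_pos (by linarith) _) (Real.rpow_pos_of_pos ht _)
    linarith
  · -- second derivative
    have hfun2 : (fun x => iteratedDeriv 2 (fun y => burgersInit wminus wm (X₀ t y)) x)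
        = fun x => P2 ((wm - wminus)/2) t (X₀ t x) := by
      funext x
      exact congrFun (iteratedDeriv_two_eq hlt ht hX) x
    rw [hfun2]
    have hmeas : AEStronglyMeasurable (fun x => P2 ((wm - wminus)/2) t (X₀ t x)) volume :=
      ((continuous_P2 ha ht).comp hXcont).aestronglyMeasurable
    have hb2 : ∀ x, |P2 ((wm - wminus)/2) t (X₀ t x)|
        ≤ 2 * min (2 * ((wm - wminus)/2)) t⁻¹ :=
      fun x => (abs_P2_le ha ht (X₀ t x)).trans (by linarith)
    have key := interp_bound (f := fun x => P2 ((wm - wminus)/2) t (X₀ t x))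
      (A := 16 * min (2 * ((wm - wminus)/2)) t⁻¹)
      (B := 2 * min (2 * ((wm - wminus)/2)) t⁻¹)
      (by nlinarith) (by nlinarith) (L1_P2 hlt ht hX) hb2 hp hmeas
    refine key.trans ?_
    apply ENNReal.ofReal_le_ofReal
    have halg := rpow_interp_le (μ := min (2 * ((wm - wminus)/2)) t⁻¹)
      (K := 16) (K' := 2) (θ := (p⁻¹).toReal) hμ hθ0 hθ1
      (by norm_num) (by norm_num) (by norm_num) (by norm_num)
    rw [hrw] at halg
    rw [hrw]
    exact halg
  · -- third derivative
    have hfun3 : (fun x => iteratedDeriv 3 (fun y => burgersInit wminus wm (X₀ t y)) x)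
        = fun x => P3 ((wm - wminus)/2) t (X₀ t x) := by
      funext x
      exact congrFun (iteratedDeriv_three_eq hlt ht hX) x
    rw [hfun3]
    have hmeas : AEStronglyMeasurable (fun x => P3 ((wm - wminus)/2) t (X₀ t x)) volume :=
      ((continuous_P3 ha ht).comp hXcont).aestronglyMeasurable
    have hb3 : ∀ x, |P3 ((wm - wminus)/2) t (X₀ t x)|
        ≤ 16 * min (2 * ((wm - wminus)/2)) t⁻¹ :=
      fun x => (abs_P3_le ha ht (X₀ t x)).trans (by linarith)
    have key := interp_bound (f := fun x => P3 ((wm - wminus)/2) t (X₀ t x))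
      (A := 128 * min (2 * ((wm - wminus)/2)) t⁻¹)
      (B := 16 * min (2 * ((wm - wminus)/2)) t⁻¹)
      (by nlinarith) (by nlinarith) (L1_P3 hlt ht hX) hb3 hp hmeas
    refine key.trans ?_
    apply ENNReal.ofReal_le_ofReal
    have halg := rpow_interp_le (μ := min (2 * ((wm - wminus)/2)) t⁻¹)
      (K := 128) (K' := 16) (θ := (p⁻¹).toReal) hμ hθ0 hθ1
      (by norm_num) (by norm_num) (by norm_num) (by norm_num)
    rw [hrw] at halg
    rw [hrw]
    exact halg
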